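/- Let A be a nonzero m×n real matrix and suppose that k GE steps (3 ≤ k ≤ min(m,n)) are performed on A with all pivot qualities equal to a common value β ∈ (0,1]. Then, using the bound H_{k−2} ≤ 1 + log k on the harmonic number, the intermediate growth factor satisfies ρ_k(A) ≤ 4 · β^{−3} · k^{1/2 − log β + (1/4)·log k}. In particular, compared to complete pivoting without mistakes, the growth bound degrades only by the polynomial factor proportional to k^{−log β}. -/

import Mathlib

open Finset Real

/-- One Gaussian elimination step on `A` with pivot position `(i, j)`:
`A_{st} - A_{sj} A_{it} / A_{ij}`. -/
noncomputable def geStep {m n : ℕ} (A : Matrix (Fin m) (Fin n) ℝ) (i : Fin m) (j : Fin n) :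
    Matrix (Fin m) (Fin n) ℝ :=
  Matrix.of fun s t => A s t - A s j * A i t / A i j

/-- The matrix `A^{(r)}` after `r` GE steps on `A`, where step `r` uses pivot
position `piv (r - 1)` (so `piv` is 0-indexed). -/
noncomputable def geIter {m n : ℕ} (A : Matrix (Fin m) (Fin n) ℝ)
    (piv : ℕ → Fin m × Fin n) : ℕ → Matrix (Fin m) (Fin n) ℝ
  | 0 => A
  | r + 1 => geStep (geIter A piv r) (piv r).1 (piv r).2

/-- Maximum absolute entry of a matrix. -/
noncomputable def maxAbs {m n : ℕ} (A : Matrix (Fin m) (Fin n) ℝ) : ℝ :=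
  ⨆ s, ⨆ t, |A s t|

/-- The magnitude `p_r = |A^{(r-1)}_{i_r j_r}|` of the `r`-th pivot (1-indexed `r`). -/
noncomputable def pivMag {m n : ℕ} (A : Matrix (Fin m) (Fin n) ℝ)
    (piv : ℕ → Fin m × Fin n) (r : ℕ) : ℝ :=
  |geIter A piv (r - 1) (piv (r - 1)).1 (piv (r - 1)).2|

/-!
Write `b_l = max |A^{(l)}|` and `p_l` for the pivots. The minor of `A` on the first `r` pivot rows
and columns, bordered by a row `s` and a column `t`, has determinant `p_1 ⋯ p_r · A^{(r)}_{st}`,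
since each elimination step is a Schur complement. Hadamard's inequality bounds this determinant by
`((r + 1) b_0²)^{(r + 1)/2}`; restarting the elimination at step `k - r` and using `p_l = β b_{l-1}`
gives Wilkinson's inequalities
`log b_k + ∑_{l=k-r}^{k-1} log b_l ≤ r log β⁻¹ + (r+1)/2 · log (r+1) + (r+1) log b_{k-r}`.
Divided by `r (r + 1)` they telescope to a bound on `log (b_k / b_0)` by harmonic-type sums in
`log β⁻¹` and `log (r + 1) / r`, which elementary estimates of `log` turn into the stated bound.
-/

open scoped Matrix

theorem Matrix.det_succ_eq_mul_det_schur {K : Type*} [Field K] {N : ℕ}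
    (M : Matrix (Fin (N + 1)) (Fin (N + 1)) K) (h : M 0 0 ≠ 0) :
    M.det = M 0 0 * (Matrix.of fun a b : Fin N =>
      M a.succ b.succ - M a.succ 0 * M 0 b.succ / M 0 0).det := by
  set c : Fin (N + 1) → K := fun a => if a = 0 then 0 else -(M a 0 / M 0 0)
  set M' : Matrix (Fin (N + 1)) (Fin (N + 1)) K := Matrix.of fun a b => M a b + c a * M 0 b
  have hM' : M'.det = M.det := Matrix.det_eq_of_forall_row_eq_smul_add_const c 0 (by simp [c])
    fun _ _ => rfl
  have hcol : ∀ a : Fin N, M' a.succ 0 = 0 := fun a => by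
    simp only [M', c, Matrix.of_apply, Fin.succ_ne_zero, ↓reduceIte]
    field_simp
    ring
  rw [← hM', Matrix.det_succ_column_zero, Fin.sum_univ_succ]
  simp only [hcol, mul_zero, zero_mul, Finset.sum_const_zero, add_zero]
  congr 2
  · simp [M', c]
  · ext a b
    simp only [M', c, Matrix.of_apply, Matrix.submatrix_apply, Fin.succAbove_zero,
      Fin.succ_ne_zero, ↓reduceIte]
    ring

theorem Finset.prod_le_arith_mean_pow_card {ι : Type*} (s : Finset ι) (f : ι → ℝ)
    (hf : ∀ i ∈ s, 0 ≤ f i) : ∏ i ∈ s, f i ≤ ((∑ i ∈ s, f i) / #s) ^ #s := by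
  rcases s.eq_empty_or_nonempty with rfl | hs
  · simp
  have hcard : (#s : ℝ) ≠ 0 := by exact_mod_cast hs.card_pos.ne'
  have amgm := Real.geom_mean_le_arith_mean_weighted s (fun _ => (#s : ℝ)⁻¹) f
    (fun _ _ => inv_nonneg.2 (Nat.cast_nonneg _)) (by simp [hcard]) hf
  rw [Real.finsetProd_rpow s f hf, ← Finset.mul_sum, inv_mul_eq_div] at amgm
  calc ∏ i ∈ s, f i = ((∏ i ∈ s, f i) ^ ((#s : ℕ) : ℝ)⁻¹) ^ #s :=
        (Real.rpow_inv_natCast_pow (Finset.prod_nonneg hf) hs.card_pos.ne').symm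
    _ ≤ _ := pow_le_pow_left₀ (Real.rpow_nonneg (Finset.prod_nonneg hf) _) amgm _

theorem Matrix.PosSemidef.det_le_trace_div_pow {N : ℕ} {G : Matrix (Fin N) (Fin N) ℝ}
    (hG : G.PosSemidef) : G.det ≤ (G.trace / N) ^ N := by
  have h := Finset.univ.prod_le_arith_mean_pow_card hG.1.eigenvalues
    fun i _ => hG.eigenvalues_nonneg i
  simpa [hG.1.det_eq_prod_eigenvalues, hG.1.trace_eq_sum_eigenvalues] using h

theorem Matrix.det_sq_le_of_abs_le {N : ℕ} (M : Matrix (Fin N) (Fin N) ℝ) {b : ℝ}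
    (hb : ∀ i j, |M i j| ≤ b) : M.det ^ 2 ≤ (N * b ^ 2) ^ N := by
  have hG : (Mᵀ * M).PosSemidef := by
    simpa using Matrix.posSemidef_conjTranspose_mul_self M
  have htrace : (Mᵀ * M).trace ≤ N * (N * b ^ 2) := by
    calc (Mᵀ * M).trace = ∑ i, ∑ j, M j i ^ 2 := by
          simp [Matrix.trace, Matrix.mul_apply, sq]
      _ ≤ ∑ _i : Fin N, ∑ _j : Fin N, b ^ 2 := by
          refine Finset.sum_le_sum fun i _ => Finset.sum_le_sum fun j _ => ?_
          exact sq_le_sq' (abs_le.1 (hb j i)).1 (abs_le.1 (hb j i)).2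
      _ = N * (N * b ^ 2) := by simp
  calc M.det ^ 2 = (Mᵀ * M).det := by rw [Matrix.det_mul, Matrix.det_transpose, sq]
    _ ≤ ((Mᵀ * M).trace / N) ^ N := hG.det_le_trace_div_pow
    _ ≤ (N * b ^ 2) ^ N := by
        rcases N.eq_zero_or_pos with rfl | hN
        · simp
        gcongr
        · exact div_nonneg hG.trace_nonneg (Nat.cast_nonneg N)
        · rw [div_le_iff₀ (by exact_mod_cast hN)]; linarith

section GaussianElimination

variable {m n : ℕ} (A : Matrix (Fin m) (Fin n) ℝ) (piv : ℕ → Fin m × Fin n)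

theorem abs_le_maxAbs (s : Fin m) (t : Fin n) : |A s t| ≤ maxAbs A :=
  (le_ciSup (Set.finite_range fun t => |A s t|).bddAbove t).trans
    (le_ciSup (Set.finite_range fun s => ⨆ t, |A s t|).bddAbove s)

theorem exists_abs_eq_maxAbs [Nonempty (Fin m)] [Nonempty (Fin n)] :
    ∃ s t, |A s t| = maxAbs A := by
  obtain ⟨⟨s, t⟩, hmax⟩ := Finite.exists_max fun p : Fin m × Fin n => |A p.1 p.2|
  exact ⟨s, t, le_antisymm (abs_le_maxAbs A s t)
    (ciSup_le fun s' => ciSup_le fun t' => hmax (s', t'))⟩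

/-- The signed pivot `A^{(l)}_{i_{l+1} j_{l+1}}` of step `l + 1`. -/
noncomputable def pivot (l : ℕ) : ℝ := geIter A piv l (piv l).1 (piv l).2

noncomputable def borderedMinor (r : ℕ) (s : Fin m) (t : Fin n) :
    Matrix (Fin (r + 1)) (Fin (r + 1)) ℝ :=
  Matrix.of fun a b =>
    A (if (a : ℕ) < r then (piv a).1 else s) (if (b : ℕ) < r then (piv b).2 else t)

theorem geIter_add (l j : ℕ) :
    geIter A piv (l + j) = geIter (geIter A piv j) (fun i => piv (i + j)) l := by
  induction l with
  | zero => simp [geIter]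
  | succ l ih => rw [Nat.add_right_comm, geIter, ih]; rfl

theorem pivot_geIter (l j : ℕ) :
    pivot (geIter A piv j) (fun i => piv (i + j)) l = pivot A piv (l + j) := by
  simp only [pivot, geIter_add]

theorem det_borderedMinor (r : ℕ) (hr : ∀ l < r, pivot A piv l ≠ 0) (s : Fin m) (t : Fin n) :
    (borderedMinor A piv r s t).det = (∏ l ∈ range r, pivot A piv l) * geIter A piv r s t := by
  induction r generalizing A piv with
  | zero => simp [borderedMinor, geIter]
  | succ r ih =>
    set B := borderedMinor A piv (r + 1) s t
    have h0 : B 0 0 = pivot A piv 0 := by simp [B, borderedMinor, pivot, geIter]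
    have hschur : (Matrix.of fun a b : Fin (r + 1) =>
        B a.succ b.succ - B a.succ 0 * B 0 b.succ / B 0 0) =
          borderedMinor (geIter A piv 1) (fun i => piv (i + 1)) r s t := by
      ext a b
      by_cases ha : (a : ℕ) < r <;> by_cases hb : (b : ℕ) < r <;>
        simp [B, borderedMinor, geIter, geStep, ha, hb]
    have hr' : ∀ l < r, pivot (geIter A piv 1) (fun i => piv (i + 1)) l ≠ 0 := fun l hl => by
      rw [pivot_geIter]; exact hr _ (by omega)
    rw [Matrix.det_succ_eq_mul_det_schur _ (h0 ▸ hr 0 r.succ_pos), hschur, ih _ _ hr', h0,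
      ← geIter_add, prod_range_succ']
    simp only [pivot_geIter]
    ring

theorem sq_prod_pivot_mul_le (r : ℕ) (hr : ∀ l < r, pivot A piv l ≠ 0)
    (s : Fin m) (t : Fin n) :
    ((∏ l ∈ range r, pivot A piv l) * geIter A piv r s t) ^ 2 ≤
      ((r + 1) * maxAbs A ^ 2) ^ (r + 1) := by
  rw [← det_borderedMinor A piv r hr]
  exact_mod_cast (borderedMinor A piv r s t).det_sq_le_of_abs_le fun _ _ => abs_le_maxAbs A _ _

end GaussianElimination

section Wilkinson

variable {m n : ℕ} (A : Matrix (Fin m) (Fin n) ℝ) (piv : ℕ → Fin m × Fin n) {β : ℝ}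

theorem sum_log_maxAbs_geIter_le (hβ : 0 < β) (r : ℕ)
    (hb : ∀ l ≤ r, 0 < maxAbs (geIter A piv l))
    (hp : ∀ l < r, |pivot A piv l| = β * maxAbs (geIter A piv l)) :
    ∑ l ∈ range (r + 1), log (maxAbs (geIter A piv l)) ≤
      r * log β⁻¹ + (r + 1) / 2 * log (r + 1) + (r + 1) * log (maxAbs A) := by
  have : Nonempty (Fin m) := ⟨(piv 0).1⟩
  have : Nonempty (Fin n) := ⟨(piv 0).2⟩
  obtain ⟨s, t, hst⟩ := exists_abs_eq_maxAbs (geIter A piv r)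
  have hpiv : ∀ l < r, pivot A piv l ≠ 0 := fun l hl =>
    abs_pos.1 ((hp l hl).symm ▸ mul_pos hβ (hb l hl.le))
  have hadamard : (β ^ r * ∏ l ∈ range (r + 1), maxAbs (geIter A piv l)) ^ 2 ≤
      ((r + 1) * maxAbs A ^ 2) ^ (r + 1) := by
    have h := sq_prod_pivot_mul_le A piv r hpiv s t
    rwa [← sq_abs, abs_mul, abs_prod, hst, prod_congr rfl fun l hl => hp l (mem_range.1 hl),
      prod_mul_distrib, prod_const, card_range, mul_assoc, ← prod_range_succ] at h
  have hb0 : 0 < maxAbs A := hb 0 r.zero_le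
  have hbr : ∀ l ∈ range (r + 1), 0 < maxAbs (geIter A piv l) := fun l hl =>
    hb l (Nat.lt_succ_iff.1 (mem_range.1 hl))
  have hprod := prod_pos hbr
  have hlog := log_le_log (by positivity) hadamard
  rw [log_pow, log_mul (by positivity) hprod.ne', log_pow,
    log_prod fun l hl => (hbr l hl).ne', log_pow, log_mul (by positivity) (by positivity),
    log_pow] at hlog
  rw [log_inv]
  push_cast at hlog
  linarith

theorem sum_log_maxAbs_geIter_sub_le (hβ : 0 < β) (k : ℕ)
    (hb : ∀ l ≤ k, 0 < maxAbs (geIter A piv l))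
    (hp : ∀ l < k, |pivot A piv l| = β * maxAbs (geIter A piv l)) (r : ℕ) (hr : r ≤ k) :
    ∑ q ∈ range (r + 1), log (maxAbs (geIter A piv (k - q))) ≤
      r * log β⁻¹ + (r + 1) / 2 * log (r + 1) +
        (r + 1) * log (maxAbs (geIter A piv (k - r))) := by
  obtain ⟨j, rfl⟩ : ∃ j, k = r + j := ⟨k - r, by omega⟩
  have h := sum_log_maxAbs_geIter_le (geIter A piv j) (fun i => piv (i + j)) hβ r
    (fun l hl => by rw [← geIter_add]; exact hb _ (by omega))
    (fun l hl => by rw [pivot_geIter, ← geIter_add]; exact hp _ (by omega))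
  rw [← sum_range_reflect] at h
  simp only [← geIter_add, Nat.add_sub_cancel] at h
  convert h using 3 with q hq
  · rw [mem_range] at hq; congr 2; omega
  · simp

end Wilkinson

section Recurrence

variable {d C : ℕ → ℝ}

theorem head_sub_mean_le_of_sum_le (k : ℕ)
    (h : ∀ r ∈ Icc 1 k, ∑ q ∈ range (r + 1), d q ≤ C r + (r + 1) * d r) :
    d 0 - (∑ q ∈ range (k + 1), d q) / (k + 1) ≤ ∑ r ∈ Icc 1 k, C r / (r * (r + 1)) := by
  induction k with
  | zero => simp
  | succ k ih =>
    have ih := ih fun r hr => h r (Icc_subset_Icc_right k.le_succ hr)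
    have hk := h (k + 1) (right_mem_Icc.2 k.succ_pos)
    rw [sum_range_succ] at hk ⊢
    rw [sum_Icc_succ_top k.succ_pos]
    have step : (∑ q ∈ range (k + 1), d q) / (k + 1) -
        (∑ q ∈ range (k + 1), d q + d (k + 1)) / (k + 1 + 1) ≤
          C (k + 1) / ((k + 1) * (k + 1 + 1)) := by
      rw [div_sub_div _ _ (by positivity) (by positivity)]
      gcongr
      push_cast at hk
      linarith
    push_cast
    linarith

theorem head_sub_le_of_sum_le {k : ℕ} (hk : 1 ≤ k)
    (h : ∀ r ∈ Icc 1 k, ∑ q ∈ range (r + 1), d q ≤ C r + (r + 1) * d r) :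
    d 0 - d k ≤ ∑ r ∈ Icc 1 k, C r / (r * (r + 1)) + C k / (k + 1) := by
  have hmean := head_sub_mean_le_of_sum_le k h
  have hlast : (∑ q ∈ range (k + 1), d q) / (k + 1) ≤ C k / (k + 1) + d k := by
    rw [div_add' _ _ _ (by positivity)]
    gcongr
    linarith [h k (right_mem_Icc.2 hk)]
  linarith

end Recurrence

section Estimates

theorem log_add_one_sub_log_le {x : ℝ} (hx : 0 < x) : log (x + 1) - log x ≤ 1 / x := by
  rw [← log_div (by positivity) hx.ne']
  calc log ((x + 1) / x) ≤ (x + 1) / x - 1 := log_le_sub_one_of_pos (by positivity)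
    _ = 1 / x := by field_simp; ring

theorem inv_add_one_le_log_add_one_sub_log {x : ℝ} (hx : 0 < x) :
    1 / (x + 1) ≤ log (x + 1) - log x := by
  rw [← log_div (by positivity) hx.ne']
  calc 1 / (x + 1) = 1 - ((x + 1) / x)⁻¹ := by field_simp; ring
    _ ≤ _ := one_sub_inv_le_log_of_pos (by positivity)

-- The correction term `(log (k + 2) + 3 / 2) / (k + 1)` is what lets the induction step close;
-- the constant `11 / 5` is then dictated by the case `k = 0`.
theorem sum_Icc_log_add_one_div_le (k : ℕ) :
    ∑ r ∈ Icc 1 k, log (r + 1) / r ≤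
      log (k + 1) ^ 2 / 2 + 11 / 5 - (log (k + 1 + 1) + 3 / 2) / (k + 1) := by
  induction k with
  | zero => norm_num; linarith [log_two_lt_d9]
  | succ k ih =>
    rw [sum_Icc_succ_top k.succ_pos]
    push_cast
    generalize hn : (k : ℝ) + 1 = n at *
    have hn1 : 1 ≤ n := by rw [← hn]; simp
    have hvu := log_add_one_sub_log_le (x := n) (by linarith)
    have hvu' := inv_add_one_le_log_add_one_sub_log (x := n) (by linarith)
    have hwv := log_add_one_sub_log_le (x := n + 1) (by linarith)
    have hu : 0 ≤ log n := log_nonneg hn1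
    have hb : 0 < 1 / (n + 1) := by positivity
    have hab : 1 / n - 1 / (n + 1) = 1 / n * (1 / (n + 1)) := by field_simp; ring
    have ha2b : 1 / n ≤ 2 * (1 / (n + 1)) := by
      rw [div_le_iff₀ (by linarith)]; field_simp; linarith
    rw [div_eq_mul_one_div (log (n + 1) + 3 / 2)] at ih
    rw [div_eq_mul_one_div (log (n + 1)), div_eq_mul_one_div (log (n + 1 + 1) + 3 / 2)]
    nlinarith [mul_nonneg (sub_nonneg.2 hvu') (by linarith : 0 ≤ log (n + 1)),
      mul_self_le_mul_self (by linarith : 0 ≤ log (n + 1) - log n) hvu,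
      mul_nonneg (sub_nonneg.2 hwv) hb.le,
      mul_nonneg (sub_nonneg.2 ha2b) (by linarith : 0 ≤ 1 / n - 1 / (n + 1))]

theorem sum_Icc_inv_add_one_le (k : ℕ) : ∑ r ∈ Icc 1 k, 1 / ((r : ℝ) + 1) ≤ 1 + log k :=
  calc ∑ r ∈ Icc 1 k, 1 / ((r : ℝ) + 1) ≤ ∑ r ∈ Icc 1 k, 1 / (r : ℝ) :=
        sum_le_sum fun r hr =>
          one_div_le_one_div_of_le (Nat.cast_pos.2 (mem_Icc.1 hr).1) (by linarith)
    _ = harmonic k := by simp [harmonic_eq_sum_Icc]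
    _ ≤ 1 + log k := harmonic_le_one_add_log k

theorem sum_Icc_log_add_one_div_add_log_le {k : ℕ} (hk : 2 ≤ k) :
    ∑ r ∈ Icc 1 k, log (r + 1) / r + log (k + 1) ≤ 2 * log 4 + log k + log k ^ 2 / 2 := by
  have hk2 : (2 : ℝ) ≤ k := by exact_mod_cast hk
  have hS := sum_Icc_log_add_one_div_le k
  have hxy := log_add_one_sub_log_le (x := k) (by positivity)
  have hxy' := inv_add_one_le_log_add_one_sub_log (x := k) (by positivity)
  have hzx : log (k + 1) ≤ log (k + 1 + 1) := log_le_log (by positivity) (by linarith)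
  have hx : log (k + 1) ≤ k := by linarith [log_le_sub_one_of_pos (x := k + 1) (by positivity)]
  have hy : 0 ≤ log k := log_nonneg (by linarith)
  have hyx : log k ≤ log (k + 1) := log_le_log (by positivity) (by linarith)
  have hlog4 : (1.38 : ℝ) ≤ log 4 := by
    rw [show (4 : ℝ) = 2 ^ 2 by norm_num, log_pow]; push_cast; linarith [log_two_gt_d9]
  have hsq : log (k + 1) ^ 2 - log k ^ 2 ≤ 2 * (log (k + 1) / k) := by
    have := mul_le_mul_of_nonneg_right hxy (by linarith : 0 ≤ log (k + 1) + log k)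
    rw [div_mul_eq_mul_div, one_mul] at this
    rw [← mul_div_assoc]
    nlinarith [this, div_le_div_of_nonneg_right
      (by linarith : log (k + 1) + log k ≤ 2 * log (k + 1)) (by positivity : (0 : ℝ) ≤ k)]
  have htail : (log (k + 1) + 1) / k - (log (k + 1 + 1) + 3 / 2) / (k + 1) ≤ 1 / 3 := by
    rw [div_sub_div _ _ (by positivity) (by positivity), div_le_iff₀ (by positivity)]
    nlinarith
  have : log (k + 1) / k + 1 / k = (log (k + 1) + 1) / k := by ring
  linarith

theorem sum_Icc_wilkinson_le {k : ℕ} (hk : 2 ≤ k) {L : ℝ} (hL : 0 ≤ L) :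
    ∑ r ∈ Icc 1 k, (r * L + (r + 1) / 2 * log (r + 1)) / (r * (r + 1)) +
        (k * L + (k + 1) / 2 * log (k + 1)) / (k + 1) ≤
      log 4 + 3 * L + (1 / 2 + L + 1 / 4 * log k) * log k := by
  have hsplit : ∀ r ∈ Icc 1 k, (r * L + (r + 1) / 2 * log (r + 1)) / (r * (r + 1)) =
      L * (1 / ((r : ℝ) + 1)) + 1 / 2 * (log (r + 1) / r) := fun r hr => by
    have : (0 : ℝ) < r := Nat.cast_pos.2 (mem_Icc.1 hr).1
    field_simp
  have hlast : (k * L + (k + 1) / 2 * log (k + 1)) / (k + 1) =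
      L * (k / (k + 1)) + log (k + 1) / 2 := by
    field_simp
  have hk1 : (k : ℝ) / (k + 1) ≤ 1 := by rw [div_le_one (by positivity)]; linarith
  have hy : 0 ≤ log k := log_nonneg (by exact_mod_cast (by omega : 1 ≤ k))
  rw [sum_congr rfl hsplit, sum_add_distrib, ← mul_sum, ← mul_sum, hlast]
  nlinarith [mul_le_mul_of_nonneg_left (sum_Icc_inv_add_one_le k) hL,
    mul_le_mul_of_nonneg_left hk1 hL, mul_nonneg hL hy, sum_Icc_log_add_one_div_add_log_le hk]

end Estimates

theorem ge_growth_common_pivot_quality_simplified_general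
    (m n k : ℕ) (A : Matrix (Fin m) (Fin n) ℝ)
    (hk : 3 ≤ k)
    (piv : ℕ → Fin m × Fin n)
    (hpiv : ∀ r < k, geIter A piv r (piv r).1 (piv r).2 ≠ 0)
    (β : ℝ) (hβpos : 0 < β) (hβle : β ≤ 1)
    (hβdef : ∀ r, 1 ≤ r → r ≤ k →
      β = pivMag A piv r / maxAbs (geIter A piv (r - 1))) :
    maxAbs (geIter A piv k) / maxAbs A ≤
      4 * (β⁻¹) ^ 3 *
        (k : ℝ) ^ ((1 / 2 : ℝ) - Real.log β + (1 / 4 : ℝ) * Real.log k) := by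
  have hpos : ∀ l < k, 0 < maxAbs (geIter A piv l) := fun l hl =>
    (abs_pos.2 (hpiv l hl)).trans_le (abs_le_maxAbs _ _ _)
  have hA0 : 0 < maxAbs A := hpos 0 (by omega)
  have hbound : 0 < 4 * (β⁻¹) ^ 3 *
      (k : ℝ) ^ ((1 / 2 : ℝ) - Real.log β + (1 / 4 : ℝ) * Real.log k) := by positivity
  rcases le_or_gt (maxAbs (geIter A piv k)) 0 with hk0 | hk0
  · exact (div_nonpos_of_nonpos_of_nonneg hk0 hA0.le).trans hbound.le
  have hb : ∀ l ≤ k, 0 < maxAbs (geIter A piv l) := fun l hl =>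
    hl.lt_or_eq.elim (hpos l) (· ▸ hk0)
  have hp : ∀ l < k, |pivot A piv l| = β * maxAbs (geIter A piv l) := fun l hl => by
    rw [hβdef (l + 1) (by omega) (by omega), pivMag, Nat.add_sub_cancel,
      div_mul_cancel₀ _ (hpos l hl).ne', pivot]
  have hrec := head_sub_le_of_sum_le (d := fun q => log (maxAbs (geIter A piv (k - q))))
    (C := fun r => r * log β⁻¹ + (r + 1) / 2 * log (r + 1)) (by omega : 1 ≤ k)
    fun r hr => sum_log_maxAbs_geIter_sub_le A piv hβpos k hb hp r (mem_Icc.1 hr).2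
  have hest := sum_Icc_wilkinson_le (by omega : 2 ≤ k)
    (log_nonneg (one_le_inv_iff₀.2 ⟨hβpos, hβle⟩))
  simp only [Nat.sub_zero, Nat.sub_self, geIter] at hrec
  rw [show (1 / 2 : ℝ) - log β = 1 / 2 + log β⁻¹ by rw [log_inv]; ring] at hbound ⊢
  rw [← log_le_log_iff (div_pos hk0 hA0) hbound, log_div hk0.ne' hA0.ne',
    log_mul (by positivity) (by positivity), log_mul (by norm_num) (by positivity), log_pow,
    log_rpow (by positivity)]
  push_cast
  linarith

/-- **Example 1, simplified bound.** If all pivot qualities equal a common value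
`β ∈ (0,1]`, then using `H_{k-2} ≤ 1 + log k`,
`ρ_k(A) ≤ 4 β⁻³ k^{1/2 - log β + (1/4) log k}`. -/
theorem ge_growth_common_pivot_quality_simplified
    (m n k : ℕ) (A : Matrix (Fin m) (Fin n) ℝ) (hA : A ≠ 0)
    (hk : 3 ≤ k) (hkmn : k ≤ min m n)
    (piv : ℕ → Fin m × Fin n)
    (hpiv : ∀ r < k, geIter A piv r (piv r).1 (piv r).2 ≠ 0)
    (β : ℝ) (hβpos : 0 < β) (hβle : β ≤ 1)
    (hβdef : ∀ r, 1 ≤ r → r ≤ k →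
      β = pivMag A piv r / maxAbs (geIter A piv (r - 1))) :
    maxAbs (geIter A piv k) / maxAbs A ≤
      4 * (β⁻¹) ^ 3 *
        (k : ℝ) ^ ((1 / 2 : ℝ) - Real.log β + (1 / 4 : ℝ) * Real.log k) :=
  ge_growth_common_pivot_quality_simplified_general m n k A hk piv hpiv β hβpos hβle hβdef
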